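/- arXiv:1602.05136 — 2 statements merged into one kernel-verified Lean document; each statement's English description precedes it below -/
import Mathlib

section
/- For all integers x, y with 1 ≤ x ≤ n-2, 1 ≤ y ≤ n-2 and n ≥ 4, the ratio (2x + y) / min(2x + y, 2y + x) is at most (2n - 3) / n, with equality achieved at x = n - 2, y = 1. -/
/-!
If `2x + y ≤ 2y + x` the ratio is `1`. Otherwise it is `(2x + y) / (2y + x)`, which only grows
with `x / y`; since `x / y ≤ n - 2`, it is at most its value at `x = n - 2`, `y = 1`, namely
`(2n - 3) / n`.
-/

lemma div_min_le_of_div_le {G : Type*} [GroupWithZero G] [LinearOrder G] {a b c : G}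
    (ha : a ≠ 0) (h1 : 1 ≤ c) (h : a / b ≤ c) : a / min a b ≤ c := by
  rcases min_choice a b with hm | hm <;> rw [hm]
  · rwa [div_self ha]
  · exact h

lemma two_mul_add_div_two_mul_add_le {K : Type*} [Field K] [LinearOrder K] [IsStrictOrderedRing K]
    {a b t : K} (ha : 0 ≤ a) (hb : 0 < b) (ht : 0 ≤ t) (hab : a ≤ t * b) : (2 * a + b) / (2 * b + a) ≤ (2 * t + 1) / (t + 2) := by
  rw [div_le_div_iff₀ (by positivity) (by positivity)]
  linarith

/-- For all integers `x, y` with `1 ≤ x ≤ n-2`, `1 ≤ y ≤ n-2` and `n ≥ 4`, the ratio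
`(2x + y) / min (2x + y) (2y + x)` is at most `(2n - 3) / n`, with equality achieved at
`x = n - 2`, `y = 1`. -/
theorem stmt0 (n : ℤ) (hn : 4 ≤ n) :
    (∀ x y : ℤ, 1 ≤ x → x ≤ n - 2 → 1 ≤ y → y ≤ n - 2 →
      (2 * (x : ℚ) + y) / min (2 * (x : ℚ) + y) (2 * (y : ℚ) + x) ≤ (2 * (n : ℚ) - 3) / n) ∧
    (2 * ((n : ℚ) - 2) + 1) / min (2 * ((n : ℚ) - 2) + 1) (2 * (1 : ℚ) + (n - 2))
      = (2 * (n : ℚ) - 3) / n := by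
  have hn : (4 : ℚ) ≤ n := by exact_mod_cast hn
  refine ⟨fun x y hx hxn hy _ => ?_, ?_⟩
  · have hx : (1 : ℚ) ≤ x := by exact_mod_cast hx
    have hxn : (x : ℚ) ≤ n - 2 := by exact_mod_cast hxn
    have hy : (1 : ℚ) ≤ y := by exact_mod_cast hy
    have hxy : (x : ℚ) ≤ (n - 2) * y := hxn.trans (le_mul_of_one_le_right (by linarith) hy)
    have hratio : (1 : ℚ) ≤ (2 * n - 3) / n := (one_le_div (by linarith)).2 (by linarith)
    refine div_min_le_of_div_le (by linarith : (0 : ℚ) < 2 * x + y).ne' hratio ?_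
    calc (2 * (x : ℚ) + y) / (2 * y + x) ≤ (2 * ((n : ℚ) - 2) + 1) / ((n - 2) + 2) :=
          two_mul_add_div_two_mul_add_le (by linarith) (by linarith) (by linarith) hxy
      _ = (2 * n - 3) / n := by ring
  · rw [min_eq_right (by linarith)]
    ring
end

section
/- For every integer n ≥ 3 and every integer i with 1 ≤ i ≤ n - 3, the maximum over the three cases of the ratio of an i-step algorithm of class A_1 equals max{(n+i-1)/(n-1), (3i+3)/(i+3), (i+2n-3)/(i+n)}; in particular (3i+3)/(i+3) > (2i+1)/(i+2) for all i ≥ 1. -/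
theorem max_max_max_eq_of_le {α : Type*} [LinearOrder α] {a b c d : α} (h : b ≤ c) :
    max (max a b) (max c d) = max (max a c) d := by
  rw [max_assoc, max_assoc, max_eq_right (le_max_of_le_left h)]

-- Cross-multiplied, the difference of the two sides is `(x + 1) ^ 2 + 2`.
theorem two_mul_add_one_div_lt_three_mul_add_three_div {K : Type*} [Field K] [LinearOrder K]
    [IsStrictOrderedRing K] {x : K} (hx : -2 < x) :
    (2 * x + 1) / (x + 2) < (3 * x + 3) / (x + 3) := by
  rw [div_lt_div_iff₀ (by linarith) (by linarith)]
  nlinarith [sq_nonneg (x + 1)]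

theorem stmt5_general (n i : ℤ) (hi1 : 1 ≤ i) :
    max (max (((n : ℚ) + i - 1) / ((n : ℚ) - 1)) ((2 * (i : ℚ) + 1) / ((i : ℚ) + 2)))
        (max ((3 * (i : ℚ) + 3) / ((i : ℚ) + 3)) (((i : ℚ) + 2 * n - 3) / ((i : ℚ) + n)))
      = max (max (((n : ℚ) + i - 1) / ((n : ℚ) - 1)) ((3 * (i : ℚ) + 3) / ((i : ℚ) + 3)))
          (((i : ℚ) + 2 * n - 3) / ((i : ℚ) + n)) ∧
    (2 * (i : ℚ) + 1) / ((i : ℚ) + 2) < (3 * (i : ℚ) + 3) / ((i : ℚ) + 3) := by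
  have hi : (-2 : ℚ) < i := by exact_mod_cast (by omega : (-2 : ℤ) < i)
  have hlt := two_mul_add_one_div_lt_three_mul_add_three_div hi
  exact ⟨max_max_max_eq_of_le hlt.le, hlt⟩

/-- For every integer `n ≥ 3` and every integer `i` with `1 ≤ i ≤ n - 3`, the maximum over the
cases of the ratio of an `i`-step algorithm of class `A₁` equals
`max {(n+i-1)/(n-1), (3i+3)/(i+3), (i+2n-3)/(i+n)}`; in particular
`(3i+3)/(i+3) > (2i+1)/(i+2)` for all `i ≥ 1`. -/
theorem stmt5 (n i : ℤ) (hn : 3 ≤ n) (hi1 : 1 ≤ i) (hi2 : i ≤ n - 3) :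
    max (max (((n : ℚ) + i - 1) / ((n : ℚ) - 1)) ((2 * (i : ℚ) + 1) / ((i : ℚ) + 2)))
        (max ((3 * (i : ℚ) + 3) / ((i : ℚ) + 3)) (((i : ℚ) + 2 * n - 3) / ((i : ℚ) + n)))
      = max (max (((n : ℚ) + i - 1) / ((n : ℚ) - 1)) ((3 * (i : ℚ) + 3) / ((i : ℚ) + 3)))
          (((i : ℚ) + 2 * n - 3) / ((i : ℚ) + n)) ∧
    (2 * (i : ℚ) + 1) / ((i : ℚ) + 2) < (3 * (i : ℚ) + 3) / ((i : ℚ) + 3) :=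
  stmt5_general n i hi1
end
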